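/- For two orthogonal projections P and Q on a finite-dimensional Hilbert space, P and Q commute if and only if PQP and QPQ have the same range. -/

import Mathlib

open scoped ComplexOrder

/-- The range (support) of a matrix, i.e. the orthogonal complement of its kernel. -/
noncomputable def msupp {n : Type*} [Fintype n] [DecidableEq n] (X : Matrix n n ℂ) :
    Submodule ℂ (EuclideanSpace ℂ n) :=
  (LinearMap.ker (Matrix.toEuclideanLin X))ᗮ

/-!
Since `PQP = (QP)⋆(QP)`, its kernel is that of `QP`, so its support is the range of
`(QP)⋆ = PQ`; likewise the support of `QPQ` is the range of `QP`. If these ranges agree, the range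
of `QP` lies in that of `P`, so `PQP = QP`, and taking adjoints gives `PQ = PQP = QP`.
-/

namespace LinearMap

variable {𝕜 E : Type*} [RCLike 𝕜] [NormedAddCommGroup E] [InnerProductSpace 𝕜 E]
  [FiniteDimensional 𝕜 E] {p q : E →ₗ[𝕜] E}

theorem IsSymmetric.star_eq (hp : p.IsSymmetric) : star p = p :=
  ((isSymmetric_iff_isSelfAdjoint p).mp hp).star_eq

theorem IsSymmetric.star_mul_eq (hp : p.IsSymmetric) (hq : q.IsSymmetric) :
    star (q * p) = p * q := by
  rw [star_mul, hp.star_eq, hq.star_eq]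

theorem orthogonal_ker_mul_mul_eq_range (hp : p.IsSymmetric) (hq : q.IsSymmetricProjection) :
    (ker (p * q * p))ᗮ = range (p * q) := by
  have hgram : p * q * p = star (q * p) * (q * p) := by
    rw [hp.star_mul_eq hq.isSymmetric, ← mul_assoc, mul_assoc p q q, hq.isIdempotentElem.eq]
  rw [hgram, Module.End.mul_eq_comp, star_eq_adjoint, ker_adjoint_comp_self, orthogonal_ker,
    ← star_eq_adjoint, hp.star_mul_eq hq.isSymmetric]

theorem IsSymmetricProjection.commute_iff_range_mul_eq (hp : p.IsSymmetricProjection)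
    (hq : q.IsSymmetricProjection) : Commute p q ↔ range (p * q) = range (q * p) := by
  refine ⟨fun h => by rw [h.eq], fun h => ?_⟩
  have hpqp : p * (q * p) = q * p :=
    (IsIdempotentElem.comp_eq_right_iff hp.isIdempotentElem (q * p)).mpr
      (h ▸ range_comp_le_range q p)
  calc p * q = star (q * p) := (hp.isSymmetric.star_mul_eq hq.isSymmetric).symm
    _ = star (p * (q * p)) := by rw [hpqp]
    _ = p * (q * p) := by
      rw [star_mul, hp.isSymmetric.star_mul_eq hq.isSymmetric, hp.isSymmetric.star_eq,
        mul_assoc]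
    _ = q * p := hpqp

end LinearMap

namespace Matrix

variable {𝕜 n : Type*} [RCLike 𝕜] [Fintype n] [DecidableEq n]

theorem toEuclideanLin_mul (A B : Matrix n n 𝕜) :
    toEuclideanLin (A * B) = toEuclideanLin A * toEuclideanLin B := by
  simp only [← coe_toEuclideanCLM_eq_toEuclideanLin, map_mul, ContinuousLinearMap.toLinearMap_mul]

theorem isSymmetricProjection_toEuclideanLin {P : Matrix n n 𝕜} (hP : P.IsHermitian)
    (hPP : P * P = P) : (toEuclideanLin P).IsSymmetricProjection where
  isIdempotentElem := by rw [IsIdempotentElem, ← toEuclideanLin_mul, hPP]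
  isSymmetric := isSymmetric_toEuclideanLin_iff.mpr hP

end Matrix

/-- Two orthogonal projections P and Q commute iff PQP and QPQ have the same range. -/
theorem proj_commute_iff_supp_eq
    {n : Type*} [Fintype n] [DecidableEq n]
    (P Q : Matrix n n ℂ)
    (hPherm : P.IsHermitian) (hPidem : P * P = P)
    (hQherm : Q.IsHermitian) (hQidem : Q * Q = Q) :
    P * Q = Q * P ↔ msupp (P * Q * P) = msupp (Q * P * Q) := by
  have hp := Matrix.isSymmetricProjection_toEuclideanLin hPherm hPidem
  have hq := Matrix.isSymmetricProjection_toEuclideanLin hQherm hQidem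
  simp only [msupp, Matrix.toEuclideanLin_mul]
  rw [LinearMap.orthogonal_ker_mul_mul_eq_range hp.isSymmetric hq,
    LinearMap.orthogonal_ker_mul_mul_eq_range hq.isSymmetric hp,
    ← hp.commute_iff_range_mul_eq hq, commute_iff_eq, ← Matrix.toEuclideanLin_mul,
    ← Matrix.toEuclideanLin_mul, EmbeddingLike.apply_eq_iff_eq]
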